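/- arXiv:2310.08931 — 4 statements merged into one kernel-verified Lean document; each statement's English description precedes it below -/
import Mathlib

section
/- Let N ≥ 1, let f_1, …, f_N be real numbers, let E = (1/N) Σ_{i=1}^N f_i and V = (1/N) Σ_{i=1}^N (f_i − E)². Let δ > 0 satisfy E − f_k ≤ δ for every k = 1, …, N. Then the penalized χ²-divergence distributionally robust value equals the mean–variance objective: sup over q in the probability simplex Δ^N of [ Σ_{i=1}^N q_i f_i − δ·(1/(2N)) Σ_{i=1}^N (N q_i − 1)² ] = E + V/(2δ). -/
open Finset

/-!
With `a i = N q i - 1` and `g i = f i - E`, the constraint `∑ q = 1` turns the objective into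
`E + (1/N) ∑ (a i g i - δ a i² / 2)`, and completing the square gives
`E + V / (2δ) - (δ / 2N) ∑ (a i - g i / δ)²`. The square vanishes at `q i = (1 + g i / δ) / N`,
which lies in the simplex exactly because `E - f i ≤ δ`.
-/

namespace Chi2DRO

variable {ι : Type*} [Fintype ι]

noncomputable def penalizedObjective (δ : ℝ) (f q : ι → ℝ) : ℝ :=
  (∑ i, q i * f i) -
    δ * ((1 / (2 * (Fintype.card ι : ℝ))) * ∑ i, ((Fintype.card ι : ℝ) * q i - 1) ^ 2)

lemma sum_card_mul_sub_one_mul_sub_mean {f q : ι → ℝ} {E : ℝ}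
    (hE : ∑ i, f i = Fintype.card ι * E) (hq : ∑ i, q i = 1) :
    ∑ i, ((Fintype.card ι : ℝ) * q i - 1) * (f i - E) =
      Fintype.card ι * ((∑ i, q i * f i) - E) := by
  have hqE : ∑ i, q i * E = E := by rw [← sum_mul, hq, one_mul]
  simp only [sub_mul, mul_sub, mul_assoc, one_mul, sum_sub_distrib, ← mul_sum, hqE, hE,
    sum_const, card_univ, nsmul_eq_mul]
  ring

lemma penalizedObjective_eq_sub_sum_sq {δ E : ℝ} {f q : ι → ℝ} (hδ : δ ≠ 0)
    (hι : (Fintype.card ι : ℝ) ≠ 0)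
    (hE : ∑ i, f i = Fintype.card ι * E) (hq : ∑ i, q i = 1) :
    penalizedObjective δ f q =
      E + (1 / (Fintype.card ι : ℝ)) * (∑ i, (f i - E) ^ 2) / (2 * δ) -
        δ / (2 * Fintype.card ι) *
          ∑ i, ((Fintype.card ι : ℝ) * q i - 1 - (f i - E) / δ) ^ 2 := by
  rw [penalizedObjective]
  set n : ℝ := (Fintype.card ι : ℝ)
  have hexpand : ∑ i, (n * q i - 1 - (f i - E) / δ) ^ 2 =
      ∑ i, (n * q i - 1) ^ 2 - 2 / δ * ∑ i, (n * q i - 1) * (f i - E) +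
        1 / δ ^ 2 * ∑ i, (f i - E) ^ 2 := by
    rw [mul_sum, mul_sum, ← sum_sub_distrib, ← sum_add_distrib]
    refine sum_congr rfl fun i _ => ?_
    field_simp
    ring
  rw [hexpand, sum_card_mul_sub_one_mul_sub_mean hE hq]
  field_simp
  ring

noncomputable def optimalWeights (δ E : ℝ) (f : ι → ℝ) : ι → ℝ :=
  fun i => (1 + (f i - E) / δ) / Fintype.card ι

variable [Nonempty ι]

lemma optimalWeights_mem_stdSimplex {δ E : ℝ} {f : ι → ℝ} (hδ : 0 < δ)
    (hE : ∑ i, f i = Fintype.card ι * E) (hfE : ∀ i, E - f i ≤ δ) :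
    optimalWeights δ E f ∈ stdSimplex ℝ ι := by
  have hn : (0 : ℝ) < Fintype.card ι := by exact_mod_cast Fintype.card_pos
  refine ⟨fun i => div_nonneg ?_ hn.le, ?_⟩
  · have := (div_le_one hδ).2 (hfE i)
    rw [← neg_sub, neg_div] at this
    linarith
  · simp only [optimalWeights, ← sum_div, sum_add_distrib, sum_sub_distrib, hE,
      sum_const, card_univ, nsmul_eq_mul]
    field_simp
    ring

theorem isGreatest_penalizedObjective_image {δ E : ℝ} {f : ι → ℝ} (hδ : 0 < δ)
    (hE : ∑ i, f i = Fintype.card ι * E) (hfE : ∀ i, E - f i ≤ δ) :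
    IsGreatest (penalizedObjective δ f '' stdSimplex ℝ ι)
      (E + (1 / (Fintype.card ι : ℝ)) * (∑ i, (f i - E) ^ 2) / (2 * δ)) := by
  have hn : (0 : ℝ) < Fintype.card ι := by exact_mod_cast Fintype.card_pos
  refine ⟨⟨optimalWeights δ E f, optimalWeights_mem_stdSimplex hδ hE hfE, ?_⟩, ?_⟩
  · have hq := (optimalWeights_mem_stdSimplex hδ hE hfE).2
    rw [penalizedObjective_eq_sub_sum_sq hδ.ne' hn.ne' hE hq, sub_eq_self]
    refine mul_eq_zero_of_right _ (sum_eq_zero fun i _ => ?_)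
    simp only [optimalWeights]
    field_simp
    ring
  · rintro _ ⟨q, ⟨-, hq⟩, rfl⟩
    rw [penalizedObjective_eq_sub_sum_sq hδ.ne' hn.ne' hE hq, sub_le_self_iff]
    exact mul_nonneg (by positivity) (sum_nonneg fun i _ => sq_nonneg _)

end Chi2DRO

open Chi2DRO in
/-- Penalized χ²-divergence DRO equals mean–variance when
`E − f k ≤ δ` for all `k`. -/
theorem dro_chi2_penalized_eq_mean_variance
    (N : ℕ) (hN : 1 ≤ N) (f : Fin N → ℝ) (δ : ℝ) (hδ : 0 < δ)
    (E V : ℝ)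
    (hE : E = (1 / (N : ℝ)) * ∑ i, f i)
    (hV : V = (1 / (N : ℝ)) * ∑ i, (f i - E) ^ 2)
    (hcond : ∀ k, E - f k ≤ δ) :
    sSup {y : ℝ | ∃ q : Fin N → ℝ, (∀ i, 0 ≤ q i) ∧ (∑ i, q i = 1) ∧
        y = (∑ i, q i * f i) -
          δ * ((1 / (2 * (N : ℝ))) * ∑ i, ((N : ℝ) * q i - 1) ^ 2)} =
      E + V / (2 * δ) := by
  have : Nonempty (Fin N) := ⟨⟨0, hN⟩⟩
  have hmean : ∑ i, f i = Fintype.card (Fin N) * E := by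
    rw [hE, Fintype.card_fin]
    field_simp
  have h := (isGreatest_penalizedObjective_image hδ hmean hcond).csSup_eq
  rw [Fintype.card_fin] at h
  rw [hV, ← h]
  congr 1
  ext y
  simp only [Set.mem_image, stdSimplex, Set.mem_ofPred_eq, penalizedObjective, Fintype.card_fin,
    and_assoc, eq_comm]
end

section
/- Let N ≥ 1, let f_1, …, f_N be real numbers, let E = (1/N) Σ_{i=1}^N f_i and V = (1/N) Σ_{i=1}^N (f_i − E)². Let ρ > 0 satisfy (E − f_k)·√(2ρ) ≤ √V for every k = 1, …, N. Then the hard-constrained χ²-divergence distributionally robust value equals the mean–standard-deviation objective: sup over q in the probability simplex Δ^N with (1/(2N)) Σ_{i=1}^N (N q_i − 1)² ≤ ρ of Σ_{i=1}^N q_i f_i = E + √(2ρV). -/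
/-!
Write `q i = (1 + w i) / N`. Then `∑ q i * f i = E + (1 / N) * ∑ w i * (f i - E)` and the
divergence constraint reads `∑ w i ^ 2 ≤ 2 N ρ`, so Cauchy–Schwarz bounds the objective by
`E + √(2ρV)`. Equality in Cauchy–Schwarz holds for `w` proportional to `f - E`; the tilted
weights `(1 + c (f i - E)) / N` with `c = √(2ρ) / √V` attain the bound, and the hypothesis on
`ρ` says exactly that they are nonnegative.
-/

open Finset

namespace Chi2DRO

variable {N : ℕ} {f : Fin N → ℝ} {E V ρ : ℝ}

noncomputable def chi2Div (q : Fin N → ℝ) : ℝ :=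
  1 / (2 * (N : ℝ)) * ∑ i, ((N : ℝ) * q i - 1) ^ 2

noncomputable def tiltedWeights (f : Fin N → ℝ) (E c : ℝ) (i : Fin N) : ℝ :=
  (1 + c * (f i - E)) / N

lemma sum_sub_mean_eq_zero (hN : N ≠ 0) (hE : E = 1 / (N : ℝ) * ∑ i, f i) :
    ∑ i, (f i - E) = 0 := by
  rw [sum_sub_distrib, sum_const, card_univ, Fintype.card_fin, nsmul_eq_mul, hE]
  field_simp
  ring

lemma sum_sq_sub_mean_eq (hN : N ≠ 0) (hV : V = 1 / (N : ℝ) * ∑ i, (f i - E) ^ 2) :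
    ∑ i, (f i - E) ^ 2 = N * V := by
  rw [hV]
  field_simp

lemma sum_mul_eq_mean_add (hN : N ≠ 0) (hE : E = 1 / (N : ℝ) * ∑ i, f i)
    {q : Fin N → ℝ} (hq : ∑ i, q i = 1) :
    ∑ i, q i * f i = E + 1 / N * ∑ i, ((N : ℝ) * q i - 1) * (f i - E) := by
  have h : ∑ i, ((N : ℝ) * q i - 1) * (f i - E) =
      N * (∑ i, q i * f i - E * ∑ i, q i) - ∑ i, (f i - E) := by
    simp only [mul_sum, ← sum_sub_distrib]
    exact sum_congr rfl fun i _ ↦ by ring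
  rw [h, hq, sum_sub_mean_eq_zero hN hE]
  field_simp
  ring

lemma sum_mul_le_mean_add_sqrt_of_chi2Div_le (hN : N ≠ 0)
    (hE : E = 1 / (N : ℝ) * ∑ i, f i) (hV : V = 1 / (N : ℝ) * ∑ i, (f i - E) ^ 2)
    {q : Fin N → ℝ} (hq : ∑ i, q i = 1) (hd : chi2Div q ≤ ρ) :
    ∑ i, q i * f i ≤ E + √(2 * ρ * V) := by
  have hN' : (0 : ℝ) < N := by positivity
  have hw : ∑ i, ((N : ℝ) * q i - 1) ^ 2 ≤ 2 * N * ρ := by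
    rw [chi2Div, div_mul_eq_mul_div, one_mul, div_le_iff₀ (by positivity)] at hd
    linarith
  have hV0 : 0 ≤ V := by rw [hV]; positivity
  have key : ∑ i, ((N : ℝ) * q i - 1) * (f i - E) ≤ N * √(2 * ρ * V) :=
    calc ∑ i, ((N : ℝ) * q i - 1) * (f i - E)
        ≤ √(∑ i, ((N : ℝ) * q i - 1) ^ 2) * √(∑ i, (f i - E) ^ 2) :=
          Real.sum_mul_le_sqrt_mul_sqrt _ _ _
      _ ≤ √(2 * N * ρ) * √(N * V) := by
          rw [sum_sq_sub_mean_eq hN hV]; gcongr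
      _ = N * √(2 * ρ * V) := by
          rw [← Real.sqrt_mul' _ (by positivity),
            show 2 * N * ρ * (N * V) = N ^ 2 * (2 * ρ * V) by ring,
            Real.sqrt_mul (sq_nonneg _), Real.sqrt_sq hN'.le]
  rw [sum_mul_eq_mean_add hN hE hq, add_le_add_iff_left, div_mul_eq_mul_div, one_mul,
    div_le_iff₀ hN']
  linarith

lemma tiltedWeights_nonneg {c : ℝ} {i : Fin N} (h : c * (E - f i) ≤ 1) :
    0 ≤ tiltedWeights f E c i := by
  unfold tiltedWeights
  have : 0 ≤ 1 + c * (f i - E) := by linarith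
  positivity

lemma sum_tiltedWeights (hN : N ≠ 0) (hE : E = 1 / (N : ℝ) * ∑ i, f i) (c : ℝ) :
    ∑ i, tiltedWeights f E c i = 1 := by
  simp only [tiltedWeights, ← sum_div, sum_add_distrib, ← mul_sum, sum_sub_mean_eq_zero hN hE]
  simp [hN]

lemma chi2Div_tiltedWeights (hN : N ≠ 0) (hV : V = 1 / (N : ℝ) * ∑ i, (f i - E) ^ 2)
    (c : ℝ) :
    chi2Div (tiltedWeights f E c) = c ^ 2 * V / 2 := by
  have hN' : (N : ℝ) ≠ 0 := by exact_mod_cast hN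
  simp only [chi2Div, tiltedWeights, mul_div_cancel₀ _ hN', add_sub_cancel_left, mul_pow,
    ← mul_sum, sum_sq_sub_mean_eq hN hV]
  field_simp

lemma sum_tiltedWeights_mul (hN : N ≠ 0) (hE : E = 1 / (N : ℝ) * ∑ i, f i)
    (hV : V = 1 / (N : ℝ) * ∑ i, (f i - E) ^ 2) (c : ℝ) :
    ∑ i, tiltedWeights f E c i * f i = E + c * V := by
  have hN' : (N : ℝ) ≠ 0 := by exact_mod_cast hN
  rw [sum_mul_eq_mean_add hN hE (sum_tiltedWeights hN hE c)]
  simp only [tiltedWeights, mul_div_cancel₀ _ hN', add_sub_cancel_left, mul_assoc, ← mul_sum,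
    ← sq, sum_sq_sub_mean_eq hN hV]
  field_simp

end Chi2DRO

open Chi2DRO

/-- Hard-constrained χ²-divergence DRO equals mean–standard-deviation when
`(E − f k)·√(2ρ) ≤ √V` for all `k`. -/
theorem dro_chi2_constrained_eq_mean_std
    (N : ℕ) (hN : 1 ≤ N) (f : Fin N → ℝ) (ρ : ℝ) (hρ : 0 < ρ)
    (E V : ℝ)
    (hE : E = (1 / (N : ℝ)) * ∑ i, f i)
    (hV : V = (1 / (N : ℝ)) * ∑ i, (f i - E) ^ 2)
    (hcond : ∀ k, (E - f k) * Real.sqrt (2 * ρ) ≤ Real.sqrt V) :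
    sSup {y : ℝ | ∃ q : Fin N → ℝ, (∀ i, 0 ≤ q i) ∧ (∑ i, q i = 1) ∧
        (1 / (2 * (N : ℝ))) * (∑ i, ((N : ℝ) * q i - 1) ^ 2) ≤ ρ ∧
        y = ∑ i, q i * f i} =
      E + Real.sqrt (2 * ρ * V) := by
  have hN0 : N ≠ 0 := Nat.one_le_iff_ne_zero.mp hN
  have hV0 : 0 ≤ V := by rw [hV]; positivity
  -- for `V = 0` this is `c = 0`, i.e. the uniform weights, which are optimal there
  set c := √(2 * ρ) / √V
  have hc_tilt : ∀ k, c * (E - f k) ≤ 1 := fun k ↦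
    calc c * (E - f k) = (E - f k) * √(2 * ρ) / √V := by ring
      _ ≤ √V / √V := by gcongr; exact hcond k
      _ ≤ 1 := div_self_le_one _
  have hc_div : c ^ 2 * V / 2 ≤ ρ :=
    calc c ^ 2 * V / 2 = ρ * (V / V) := by
          rw [div_pow, Real.sq_sqrt (by positivity), Real.sq_sqrt hV0]; ring
      _ ≤ ρ := mul_le_of_le_one_right hρ.le (div_self_le_one V)
  have hc_val : c * V = √(2 * ρ * V) := by
    rw [div_mul_eq_mul_div, mul_div_assoc, Real.div_sqrt, Real.sqrt_mul' _ hV0]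
  refine IsGreatest.csSup_eq ⟨⟨tiltedWeights f E c, fun i ↦ tiltedWeights_nonneg (hc_tilt i),
    sum_tiltedWeights hN0 hE c, (chi2Div_tiltedWeights hN0 hV c).trans_le hc_div, ?_⟩, ?_⟩
  · rw [sum_tiltedWeights_mul hN0 hE hV, hc_val]
  · rintro y ⟨q, -, hq, hd, rfl⟩
    exact sum_mul_le_mean_add_sqrt_of_chi2Div_le hN0 hE hV hq hd
end

section
/- Let N ≥ 1, let f_1, …, f_N be real numbers, let E = (1/N) Σ_{i=1}^N f_i and V = (1/N) Σ_{i=1}^N (f_i − E)², and assume V > 0. For ρ > 0, the function G(λ, ν) = (1/N) Σ_{i=1}^N [ (1/(2ν))·(f_i − λ)² + f_i ] + νρ over λ ∈ ℝ, ν > 0 attains its infimum at λ* = E and ν* = √(V/(2ρ)), and the minimum value is E + √(2ρV). -/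
/-!
Expanding the squares around the mean gives the bias–variance identity
`(1/N) ∑ (fᵢ - λ)² = V + (E - λ)²`, so `G(λ, ν) = E + (V + (E - λ)²)/(2ν) + νρ`.
The choice `λ = E` removes the bias term, and by AM–GM `V/(2ν) + νρ ≥ √(2ρV)`,
with equality exactly when `V/(2ν) = νρ`, i.e. at `ν = √(V/(2ρ))`.
-/

open Finset

theorem Finset.sum_sub_sq_eq_sum_sub_mean_sq_add {ι : Type*} (s : Finset ι) (f : ι → ℝ)
    {E : ℝ} (hE : ∑ i ∈ s, f i = #s * E) (l : ℝ) :
    ∑ i ∈ s, (f i - l) ^ 2 = ∑ i ∈ s, (f i - E) ^ 2 + #s * (E - l) ^ 2 := by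
  have hcentered : ∑ i ∈ s, (f i - E) = 0 := by
    rw [sum_sub_distrib, hE, sum_const, nsmul_eq_mul, sub_self]
  calc ∑ i ∈ s, (f i - l) ^ 2
      = ∑ i ∈ s, ((f i - E) ^ 2 + 2 * (E - l) * (f i - E) + (E - l) ^ 2) :=
        sum_congr rfl fun i _ => by ring
    _ = ∑ i ∈ s, (f i - E) ^ 2 + #s * (E - l) ^ 2 := by
        rw [sum_add_distrib, sum_add_distrib, ← mul_sum, hcentered, sum_const, nsmul_eq_mul,
          mul_zero, add_zero]

theorem Real.sqrt_two_mul_mul_le_div_add_mul {V ρ ν : ℝ} (hV : 0 ≤ V) (hρ : 0 < ρ)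
    (hν : 0 < ν) : √(2 * ρ * V) ≤ V / (2 * ν) + ν * ρ := by
  set s := √(2 * ρ * V)
  have hs : s ^ 2 = 2 * ρ * V := Real.sq_sqrt (by positivity)
  have hgap : V / (2 * ν) + ν * ρ - s = (s - 2 * ρ * ν) ^ 2 / (4 * ρ * ν) := by
    field_simp
    linear_combination (-2) * hs
  linarith [show 0 ≤ (s - 2 * ρ * ν) ^ 2 / (4 * ρ * ν) by positivity]

theorem Real.div_two_mul_sqrt_add_sqrt_mul {V ρ : ℝ} (hV : 0 ≤ V) (hρ : 0 < ρ) :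
    V / (2 * √(V / (2 * ρ))) + √(V / (2 * ρ)) * ρ = √(2 * ρ * V) := by
  set s := √(V / (2 * ρ))
  have hVs : V = 2 * ρ * s ^ 2 := by
    rw [Real.sq_sqrt (by positivity)]
    field_simp
  have hsqrt : √(2 * ρ * V) = 2 * ρ * s := by
    rw [hVs, show 2 * ρ * (2 * ρ * s ^ 2) = (2 * ρ * s) ^ 2 by ring,
      Real.sqrt_sq (by positivity)]
  rw [hsqrt, hVs, show 2 * ρ * s ^ 2 / (2 * s) = ρ * (s * s / s) by ring, mul_self_div_self]
  ring

theorem dro_dual_objective_min_general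
    (N : ℕ) (f : Fin N → ℝ) (E V ρ : ℝ)
    (hE : E = (1 / (N : ℝ)) * ∑ i, f i)
    (hV : V = (1 / (N : ℝ)) * ∑ i, (f i - E) ^ 2)
    (hVpos : 0 < V) (hρ : 0 < ρ)
    (G : ℝ → ℝ → ℝ)
    (hG : ∀ l ν, G l ν =
      (1 / (N : ℝ)) * (∑ i, ((1 / (2 * ν)) * (f i - l) ^ 2 + f i)) + ν * ρ) :
    G E (Real.sqrt (V / (2 * ρ))) = E + Real.sqrt (2 * ρ * V) ∧
      ∀ l ν, 0 < ν → G E (Real.sqrt (V / (2 * ρ))) ≤ G l ν := by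
  have hN : (N : ℝ) ≠ 0 := by
    rintro hN
    rw [hN, div_zero, zero_mul] at hV
    exact hVpos.ne' hV
  have hsum : ∑ i, f i = #(univ : Finset (Fin N)) * E := by
    rw [card_univ, Fintype.card_fin, hE]
    field_simp
  have hGl : ∀ l ν, G l ν = E + (V + (E - l) ^ 2) / (2 * ν) + ν * ρ := by
    intro l ν
    rw [hG, sum_add_distrib, ← mul_sum, sum_sub_sq_eq_sum_sub_mean_sq_add _ _ hsum,
      card_univ, Fintype.card_fin, hsum, card_univ, Fintype.card_fin, hV]
    field_simp
    ring
  have hmin : G E √(V / (2 * ρ)) = E + √(2 * ρ * V) := by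
    rw [hGl, sub_self, zero_pow two_ne_zero, add_zero, add_assoc,
      Real.div_two_mul_sqrt_add_sqrt_mul hVpos.le hρ]
  refine ⟨hmin, fun l ν hν => ?_⟩
  calc G E √(V / (2 * ρ)) = E + √(2 * ρ * V) := hmin
    _ ≤ E + V / (2 * ν) + ν * ρ := by
        linarith [Real.sqrt_two_mul_mul_le_div_add_mul hVpos.le hρ hν]
    _ ≤ G l ν := by
        rw [hGl]
        gcongr
        exact le_add_of_nonneg_right (sq_nonneg _)

/-- The dual objective `G(λ, ν)` of the hard-constrained χ²-divergence DRO problem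
attains its infimum over `λ ∈ ℝ`, `ν > 0` at `λ* = E`, `ν* = √(V/(2ρ))`,
with minimum value `E + √(2ρV)`. -/
theorem dro_dual_objective_min
    (N : ℕ) (hN : 1 ≤ N) (f : Fin N → ℝ) (E V ρ : ℝ)
    (hE : E = (1 / (N : ℝ)) * ∑ i, f i)
    (hV : V = (1 / (N : ℝ)) * ∑ i, (f i - E) ^ 2)
    (hVpos : 0 < V) (hρ : 0 < ρ)
    (G : ℝ → ℝ → ℝ)
    (hG : ∀ l ν, G l ν =
      (1 / (N : ℝ)) * (∑ i, ((1 / (2 * ν)) * (f i - l) ^ 2 + f i)) + ν * ρ) :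
    G E (Real.sqrt (V / (2 * ρ))) = E + Real.sqrt (2 * ρ * V) ∧
      ∀ l ν, 0 < ν → G E (Real.sqrt (V / (2 * ρ))) ≤ G l ν :=
  dro_dual_objective_min_general N f E V ρ hE hV hVpos hρ G hG
end

section
/- Let ℓ(x; ξ) = ξ − (ξ − 1)x² with ξ ranging over Ξ = {−0.8, −0.4, 0, 0.4, 0.8} and nominal probabilities p_i = 1/5. Let δ ≥ 0 and let φ: [0, ∞) → [0, ∞] be any function with φ(1) = 0, and define the penalized distributionally robust objective Ψ(x) = sup over q in the probability simplex Δ^5 of [ Σ_{i=1}^5 q_i ℓ(x; ξ_i) − δ Σ_{i=1}^5 (1/5) φ(5 q_i) ]. Then Ψ(0) < Ψ(x) for every x ∈ (0, 1]; in particular, x = 0 is the unique minimizer of Ψ over [0, 1], for every choice of δ ≥ 0. -/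
/-!
Moving from `0` to `x` raises the loss at `ξ` by `(1 - ξ) x² ≥ x² / 5`, because every support point
satisfies `ξ ≤ 4/5`. The increase is uniform in the distribution `q` and the penalty does not depend
on `x`, so every value of the penalized objective at `0` is matched, up to `x² / 5`, by a value at
`x`, whence `Ψ 0 + x² / 5 ≤ Ψ x`. The uniform distribution has zero penalty, so the supremum at `0`
is over a nonempty set; on `[0, 1]` the loss is at most `1`, so the supremum at `x` is finite.
-/

open Finset
open scoped ENNReal

/-- The illustrative cost function `ℓ(x; ξ) = ξ − (ξ − 1)x²`. -/
noncomputable def ell (x ξ : ℝ) : ℝ := ξ - (ξ - 1) * x ^ 2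

/-- The support `Ξ = {−0.8, −0.4, 0, 0.4, 0.8}`. -/
noncomputable def Xi : Fin 5 → ℝ := ![-0.8, -0.4, 0, 0.4, 0.8]

lemma EReal.coe_eq_coe_sub_coe_ennreal_iff {y a : ℝ} {b : ℝ≥0∞} :
    (y : EReal) = (a : EReal) - (b : EReal) ↔ b ≠ ⊤ ∧ y = a - b.toReal := by
  rcases eq_or_ne b ⊤ with rfl | hb
  · simp [EReal.sub_top]
  · rw [← EReal.coe_ennreal_toReal hb, ← EReal.coe_sub, EReal.coe_eq_coe_iff]
    exact ⟨fun h => ⟨hb, h⟩, And.right⟩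

section StdSimplex

variable {ι : Type*} [Fintype ι] {q a b : ι → ℝ}

lemma sum_mul_le_of_mem_stdSimplex (hq : q ∈ stdSimplex ℝ ι) {M : ℝ} (h : ∀ i, a i ≤ M) :
    ∑ i, q i * a i ≤ M :=
  calc ∑ i, q i * a i ≤ ∑ i, q i * M :=
        sum_le_sum fun i _ => mul_le_mul_of_nonneg_left (h i) (hq.1 i)
    _ = M := by rw [← sum_mul, hq.2, one_mul]

lemma sum_mul_add_le_of_mem_stdSimplex (hq : q ∈ stdSimplex ℝ ι) {c : ℝ}
    (h : ∀ i, a i + c ≤ b i) : ∑ i, q i * a i + c ≤ ∑ i, q i * b i :=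
  calc ∑ i, q i * a i + c = ∑ i, q i * (a i + c) := by
        rw [sum_congr rfl fun i _ => mul_add (q i) (a i) c, sum_add_distrib, ← sum_mul, hq.2,
          one_mul]
    _ ≤ ∑ i, q i * b i := sum_le_sum fun i _ => mul_le_mul_of_nonneg_left (h i) (hq.1 i)

lemma inv_card_mem_stdSimplex [Nonempty ι] : (fun _ => (Fintype.card ι : ℝ)⁻¹) ∈ stdSimplex ℝ ι :=
  ⟨fun _ => by positivity, by simp⟩

end StdSimplex

section PenalizedValues

variable {ι : Type*} [Fintype ι]

def penalizedValues (L : (ι → ℝ) → ℝ) (P : (ι → ℝ) → ℝ≥0∞) : Set ℝ :=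
  {y : ℝ | ∃ q : ι → ℝ, (∀ i, 0 ≤ q i) ∧ (∑ i, q i = 1) ∧
    (y : EReal) = (L q : EReal) - (P q : EReal)}

variable {L L' : (ι → ℝ) → ℝ} {P : (ι → ℝ) → ℝ≥0∞}

lemma mem_penalizedValues {y : ℝ} :
    y ∈ penalizedValues L P ↔ ∃ q ∈ stdSimplex ℝ ι, P q ≠ ⊤ ∧ y = L q - (P q).toReal := by
  simp only [penalizedValues, Set.mem_ofPred_eq, EReal.coe_eq_coe_sub_coe_ennreal_iff, stdSimplex,
    and_assoc]

lemma penalizedValues_nonempty {q : ι → ℝ} (hq : q ∈ stdSimplex ℝ ι) (hP : P q = 0) :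
    (penalizedValues L P).Nonempty :=
  ⟨L q, mem_penalizedValues.2 ⟨q, hq, by simp [hP], by simp [hP]⟩⟩

lemma bddAbove_penalizedValues {M : ℝ} (hL : ∀ q ∈ stdSimplex ℝ ι, L q ≤ M) :
    BddAbove (penalizedValues L P) := by
  refine ⟨M, fun y hy => ?_⟩
  obtain ⟨q, hq, -, rfl⟩ := mem_penalizedValues.1 hy
  linarith [hL q hq, (P q).toReal_nonneg]

lemma csSup_penalizedValues_add_le {c : ℝ} (hne : (penalizedValues L P).Nonempty)
    (hbdd : BddAbove (penalizedValues L' P)) (hLL' : ∀ q ∈ stdSimplex ℝ ι, L q + c ≤ L' q) :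
    sSup (penalizedValues L P) + c ≤ sSup (penalizedValues L' P) := by
  rw [← le_sub_iff_add_le]
  refine csSup_le hne fun y hy => le_sub_iff_add_le.2 ?_
  obtain ⟨q, hq, hPq, rfl⟩ := mem_penalizedValues.1 hy
  have hmem : L' q - (P q).toReal ∈ penalizedValues L' P :=
    mem_penalizedValues.2 ⟨q, hq, hPq, rfl⟩
  linarith [hLL' q hq, le_csSup hbdd hmem]

end PenalizedValues

lemma ell_eq (x ξ : ℝ) : ell x ξ = ξ * (1 - x ^ 2) + x ^ 2 := by
  unfold ell; ring

lemma ell_le_one {x ξ : ℝ} (hx : x ∈ Set.Icc (0 : ℝ) 1) (hξ : ξ ≤ 1) : ell x ξ ≤ 1 := by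
  have hx2 : 0 ≤ 1 - x ^ 2 := by nlinarith [hx.1, hx.2]
  rw [ell_eq]
  nlinarith

lemma ell_zero_add_le (x : ℝ) {ξ : ℝ} (hξ : ξ ≤ 4 / 5) : ell 0 ξ + x ^ 2 / 5 ≤ ell x ξ := by
  rw [ell_eq, ell_eq]
  nlinarith [sq_nonneg x]

lemma Xi_le_four_fifths (i : Fin 5) : Xi i ≤ 4 / 5 := by
  fin_cases i <;> norm_num [Xi]

theorem dro_penalized_unique_minimizer_general
    (δ : ℝ) (φ : ℝ → ℝ≥0∞) (hφ1 : φ 1 = 0)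
    (Ψ : ℝ → ℝ)
    (hΨ : ∀ x, Ψ x = sSup {y : ℝ | ∃ q : Fin 5 → ℝ,
        (∀ i, 0 ≤ q i) ∧ (∑ i, q i = 1) ∧
        (y : EReal) = ((∑ i, q i * ell x (Xi i) : ℝ) : EReal) -
          (((ENNReal.ofReal δ) * ∑ i, (1 / 5 : ℝ≥0∞) * φ (5 * q i) : ℝ≥0∞) : EReal)}) :
    (∀ x ∈ Set.Ioc (0 : ℝ) 1, Ψ 0 < Ψ x) ∧
    (∀ x ∈ Set.Icc (0 : ℝ) 1, Ψ 0 ≤ Ψ x ∧ (Ψ x = Ψ 0 → x = 0)) := by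
  set P : (Fin 5 → ℝ) → ℝ≥0∞ := fun q => ENNReal.ofReal δ * ∑ i, (1 / 5 : ℝ≥0∞) * φ (5 * q i)
  have hne : (penalizedValues (fun q => ∑ i, q i * ell 0 (Xi i)) P).Nonempty :=
    penalizedValues_nonempty inv_card_mem_stdSimplex (by simp [P, hφ1])
  have key : ∀ x ∈ Set.Icc (0 : ℝ) 1, Ψ 0 + x ^ 2 / 5 ≤ Ψ x := by
    intro x hx
    have hbdd : BddAbove (penalizedValues (fun q => ∑ i, q i * ell x (Xi i)) P) :=
      bddAbove_penalizedValues fun q hq => sum_mul_le_of_mem_stdSimplex hq fun i =>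
        ell_le_one hx ((Xi_le_four_fifths i).trans (by norm_num))
    rw [hΨ 0, hΨ x]
    exact csSup_penalizedValues_add_le hne hbdd fun q hq =>
      sum_mul_add_le_of_mem_stdSimplex hq fun i => ell_zero_add_le x (Xi_le_four_fifths i)
  refine ⟨fun x hx => ?_, fun x hx => ⟨?_, fun h => ?_⟩⟩
  · nlinarith [key x (Set.Ioc_subset_Icc_self hx), hx.1]
  · nlinarith [key x hx]
  · nlinarith [key x hx, hx.1]

/-- For any penalty coefficient `δ ≥ 0` and any divergence generator
`φ : [0,∞) → [0,∞]` with `φ(1) = 0`, the penalized distributionally robust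
objective `Ψ` for `ℓ` satisfies `Ψ(0) < Ψ(x)` for all `x ∈ (0, 1]`; in
particular `x = 0` is the unique minimizer of `Ψ` over `[0, 1]`. -/
theorem dro_penalized_unique_minimizer
    (δ : ℝ) (hδ : 0 ≤ δ) (φ : ℝ → ℝ≥0∞) (hφ1 : φ 1 = 0)
    (Ψ : ℝ → ℝ)
    (hΨ : ∀ x, Ψ x = sSup {y : ℝ | ∃ q : Fin 5 → ℝ,
        (∀ i, 0 ≤ q i) ∧ (∑ i, q i = 1) ∧
        (y : EReal) = ((∑ i, q i * ell x (Xi i) : ℝ) : EReal) -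
          (((ENNReal.ofReal δ) * ∑ i, (1 / 5 : ℝ≥0∞) * φ (5 * q i) : ℝ≥0∞) : EReal)}) :
    (∀ x ∈ Set.Ioc (0 : ℝ) 1, Ψ 0 < Ψ x) ∧
    (∀ x ∈ Set.Icc (0 : ℝ) 1, Ψ 0 ≤ Ψ x ∧ (Ψ x = Ψ 0 → x = 0)) :=
  dro_penalized_unique_minimizer_general δ φ hφ1 Ψ hΨ
end
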